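/- Let n≥1 be an integer and h>0. There exists an operator 𝒦∈𝔎 (independent of φ) such that for every n-times continuously differentiable function φ on ℝ^d and every x∈ℝ^d: Σ_{λ∈Λ₁ⁿ} |δ̄_{h,λ}φ(x)|² ≤ ‖Λ₁‖^{2n} · 𝒦(|Dⁿφ|²)(x). -/

import Mathlib

open scoped BigOperators
open MeasureTheory

noncomputable section

/-- `ℝ^d` with Euclidean norm. -/
abbrev Vec (d : ℕ) := EuclideanSpace ℝ (Fin d)

namespace GK

variable {d : ℕ}

/-- forward difference `δ_{h,λ}φ`. -/
def del (h : ℝ) (l : Vec d) (φ : Vec d → ℝ) (x : Vec d) : ℝ :=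
  (φ (x + h • l) - φ x) / h

/-- symmetric second difference `Δ_{h,λ}φ`. -/
def del2 (h : ℝ) (l : Vec d) (φ : Vec d → ℝ) (x : Vec d) : ℝ :=
  (φ (x + h • l) - 2 * φ x + φ (x - h • l)) / h ^ 2

/-- `i`-th partial derivative `D_iφ`. -/
def pd (i : Fin d) (φ : Vec d → ℝ) (x : Vec d) : ℝ :=
  fderiv ℝ φ x (EuclideanSpace.single i 1)

/-- second partial derivatives `D_{ij}φ`. -/
def pd2 (i j : Fin d) (φ : Vec d → ℝ) (x : Vec d) : ℝ :=
  iteratedFDeriv ℝ 2 φ x ![EuclideanSpace.single i 1, EuclideanSpace.single j 1]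

/-- The index type for `Λ = Λ₁ ∪ Λ₂`: `Sum.inl` is an element of `Λ₁`,
`Sum.inr i` stands for the vector `ℓⁱ ∈ Λ₂`. -/
abbrev Dir (L1 : Finset (Vec d)) : Type _ := {l : Vec d // l ∈ L1} ⊕ Fin d

/-- the subtype of elements of `Λ₁`. -/
abbrev L1t (L1 : Finset (Vec d)) := {l : Vec d // l ∈ L1}

/-- the weighted difference operator `δ̄_{h,λ}`, `λ ∈ Λ`:
`τ_λ δ_{h,λ}` on `Λ₁` and `τ₀ D_i` on `Λ₂`. -/
def dbar (h τ₀ : ℝ) (τ : Vec d → ℝ) {L1 : Finset (Vec d)} :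
    Dir L1 → (Vec d → ℝ) → Vec d → ℝ
  | Sum.inl l => fun φ x => τ l.1 * del h l.1 φ x
  | Sum.inr i => fun φ x => τ₀ * pd i φ x

/-- the shift operator `T_{h,λ}`, `λ ∈ Λ`: a genuine shift on `Λ₁`, the identity on `Λ₂`. -/
def shiftD (h : ℝ) {L1 : Finset (Vec d)} : Dir L1 → (Vec d → ℝ) → Vec d → ℝ
  | Sum.inl l => fun φ x => φ (x + h • l.1)
  | Sum.inr _ => fun φ x => φ x

/-- `δ̄_{h,λ}` for a multivector `λ ∈ Λᵏ`. -/
def dbarT (h τ₀ : ℝ) (τ : Vec d → ℝ) {L1 : Finset (Vec d)} {k : ℕ}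
    (lam : Fin k → Dir L1) (φ : Vec d → ℝ) : Vec d → ℝ :=
  (List.ofFn lam).foldr (fun a ψ => dbar h τ₀ τ a ψ) φ

/-- `T_{h,λ}` for a multivector `λ ∈ Λᵏ`. -/
def shiftT (h : ℝ) {L1 : Finset (Vec d)} {k : ℕ}
    (lam : Fin k → Dir L1) (φ : Vec d → ℝ) : Vec d → ℝ :=
  (List.ofFn lam).foldr (fun a ψ => shiftD h a ψ) φ

/-- `|Λ₁|² = Σ_{λ∈Λ₁} |λ|²`. -/
def normL1sq (L1 : Finset (Vec d)) : ℝ := ∑ l ∈ L1, ‖l‖ ^ 2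

/-- `‖Λ₁‖² = Σ_{λ∈Λ₁} |τ_λ λ|²`. -/
def wnormL1sq (L1 : Finset (Vec d)) (τ : Vec d → ℝ) : ℝ := ∑ l ∈ L1, ‖τ l • l‖ ^ 2

/-- the operator `L⁰_h` (at a fixed time, `qt μ`, `pt μ` being the coefficients
as functions of `x`). -/
def L0 (h : ℝ) (L1 : Finset (Vec d)) (qt pt : Vec d → Vec d → ℝ)
    (φ : Vec d → ℝ) (x : Vec d) : ℝ :=
  h⁻¹ * ∑ l ∈ L1, qt l x * del h l φ x + ∑ l ∈ L1, pt l x * del h l φ x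

/-- the quadratic form `𝒬(φ) = Σ_{μ∈Λ₁} χ_μ (δ_{h,μ}φ)²`, `χ_μ = q_μ + h p_μ`. -/
def Qform (h : ℝ) (L1 : Finset (Vec d)) (qt pt : Vec d → Vec d → ℝ)
    (φ : Vec d → ℝ) (x : Vec d) : ℝ :=
  ∑ l ∈ L1, (qt l x + h * pt l x) * (del h l φ x) ^ 2

/-- `Q_μ φ = h⁻¹ Σ_{λ∈Λ₁} (δ̄_{h,μ} q_λ) δ_{h,λ}φ` for a multivector `μ`. -/
def Qmu (h τ₀ : ℝ) (τ : Vec d → ℝ) (L1 : Finset (Vec d)) {k : ℕ}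
    (qt : Vec d → Vec d → ℝ) (lam : Fin k → Dir L1) (φ : Vec d → ℝ) (x : Vec d) : ℝ :=
  h⁻¹ * ∑ l ∈ L1, dbarT h τ₀ τ lam (qt l) x * del h l φ x

/-- `P_μ φ = Σ_{λ∈Λ₁} (δ̄_{h,μ} p_λ) δ_{h,λ}φ` for a multivector `μ`. -/
def Pmu (h τ₀ : ℝ) (τ : Vec d → ℝ) (L1 : Finset (Vec d)) {k : ℕ}
    (pt : Vec d → Vec d → ℝ) (lam : Fin k → Dir L1) (φ : Vec d → ℝ) (x : Vec d) : ℝ :=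
  ∑ l ∈ L1, dbarT h τ₀ τ lam (pt l) x * del h l φ x

/-- `L⁰_μ = Q_μ + P_μ`. -/
def L0mu (h τ₀ : ℝ) (τ : Vec d → ℝ) (L1 : Finset (Vec d)) {k : ℕ}
    (qt pt : Vec d → Vec d → ℝ) (lam : Fin k → Dir L1) (φ : Vec d → ℝ) (x : Vec d) : ℝ :=
  Qmu h τ₀ τ L1 qt lam φ x + Pmu h τ₀ τ L1 pt lam φ x

/-- `A₁(φ) = 2 Σ_{λ∈Λ} (δ̄_{h,λ}φ) L⁰_λ T_{h,λ}φ`. -/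
def A1form (h τ₀ : ℝ) (τ : Vec d → ℝ) (L1 : Finset (Vec d))
    (qt pt : Vec d → Vec d → ℝ) (φ : Vec d → ℝ) (x : Vec d) : ℝ :=
  2 * ∑ a : Dir L1, dbar h τ₀ τ a φ x * L0mu h τ₀ τ L1 qt pt ![a] (shiftD h a φ) x

/-- membership in the class `𝔎` of bounded operators on bounded Borel functions
preserving the cone of nonnegative functions and with `𝒦1 ≤ 1`. -/
def MemFrakK (K : (Vec d → ℝ) → Vec d → ℝ) : Prop :=
  (∀ φ : Vec d → ℝ, Measurable φ → Bornology.IsBounded (Set.range φ) →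
      Measurable (K φ) ∧ Bornology.IsBounded (Set.range (K φ))) ∧
  (∀ φ : Vec d → ℝ, (∀ x, 0 ≤ φ x) → ∀ x, 0 ≤ K φ x) ∧
  ∀ x, K (fun _ => (1 : ℝ)) x ≤ 1

/-- inequality (3.24.1) of Assumption 2.4 (A4), at a fixed time. -/
def IneqA4 (h τ₀ : ℝ) (τ : Vec d → ℝ) (L1 : Finset (Vec d))
    (qt pt : Vec d → Vec d → ℝ) (ct : Vec d → ℝ) (δ K₁ : ℝ) (m : ℕ)
    (K : (Vec d → ℝ) → Vec d → ℝ) (φ : Vec d → ℝ) (x : Vec d) : Prop :=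
  (m : ℝ) * A1form h τ₀ τ L1 qt pt φ x ≤
    (1 - δ) * (∑ a : Dir L1, Qform h L1 qt pt (dbar h τ₀ τ a φ) x)
    + K₁ * Qform h L1 qt pt φ x
    + 2 * (1 - δ) * ct x * K (fun y => ∑ a : Dir L1, (dbar h τ₀ τ a φ y) ^ 2) x

/-- inequality (3.24.01) of Assumption 2.5 (A5), at a fixed time. -/
def IneqA5 (h τ₀ : ℝ) (τ : Vec d → ℝ) (L1 : Finset (Vec d))
    (qt pt : Vec d → Vec d → ℝ) (ct : Vec d → ℝ) (δ K₁ : ℝ) (n : ℕ)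
    (K : (Vec d → ℝ) → Vec d → ℝ) (φ : Vec d → ℝ) (x : Vec d) : Prop :=
  (n : ℝ) * (∑ a : Dir L1, A1form h τ₀ τ L1 qt pt (dbar h τ₀ τ a φ) x)
  + (n : ℝ) * ((n : ℝ) - 1) *
      (∑ lam : Fin 2 → Dir L1,
        dbarT h τ₀ τ lam φ x * Qmu h τ₀ τ L1 qt lam (shiftT h lam φ) x)
  ≤ (1 - δ) * (∑ lam : Fin 2 → Dir L1, Qform h L1 qt pt (dbarT h τ₀ τ lam φ) x)
    + K₁ * (∑ a : Dir L1, Qform h L1 qt pt (dbar h τ₀ τ a φ) x)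
    + 2 * (1 - δ) * ct x *
        K (fun y => ∑ lam : Fin 2 → Dir L1, (dbarT h τ₀ τ lam φ y) ^ 2) x
    + K₁ * K (fun y => ∑ a : Dir L1, (dbar h τ₀ τ a φ y) ^ 2) x

/-- regularity and boundedness of the coefficients `q, p, c` (the `q,p,c` part of
Assumption 2.1 (A1(m))). -/
def CoefReg (T : ℝ) (L1 : Finset (Vec d)) (m : ℕ)
    (q p : Vec d → ℝ → Vec d → ℝ) (c : ℝ → Vec d → ℝ) (M : ℕ → ℝ) : Prop :=
  (∀ l ∈ L1, ∀ t ∈ Set.Icc (0 : ℝ) T, ContDiff ℝ (m : ℕ∞) (q l t) ∧ ContDiff ℝ (m : ℕ∞) (p l t)) ∧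
  (∀ t ∈ Set.Icc (0 : ℝ) T, ContDiff ℝ (m : ℕ∞) (c t)) ∧
  (∀ k ≤ m, ∀ l ∈ L1,
    ContinuousOn (fun tx : ℝ × Vec d => iteratedFDeriv ℝ k (q l tx.1) tx.2)
      (Set.Icc (0 : ℝ) T ×ˢ Set.univ) ∧
    ContinuousOn (fun tx : ℝ × Vec d => iteratedFDeriv ℝ k (p l tx.1) tx.2)
      (Set.Icc (0 : ℝ) T ×ˢ Set.univ)) ∧
  (∀ k ≤ m,
    ContinuousOn (fun tx : ℝ × Vec d => iteratedFDeriv ℝ k (c tx.1) tx.2)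
      (Set.Icc (0 : ℝ) T ×ˢ Set.univ)) ∧
  (∀ k ≤ m, ∀ t ∈ Set.Icc (0 : ℝ) T, ∀ x,
    (∑ l ∈ L1, (‖iteratedFDeriv ℝ k (q l t) x‖ ^ 2 + ‖iteratedFDeriv ℝ k (p l t) x‖ ^ 2))
      + ‖iteratedFDeriv ℝ k (c t) x‖ ^ 2 ≤ (M k) ^ 2)

/-- regularity of the free terms `f, g` (the `f,g` part of Assumption 2.1 (A1(m))). -/
def FreeReg (T : ℝ) (m : ℕ) (f : ℝ → Vec d → ℝ) (g : Vec d → ℝ) : Prop :=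
  (∀ t ∈ Set.Icc (0 : ℝ) T, ContDiff ℝ (m : ℕ∞) (f t)) ∧
  (∀ k ≤ m,
    ContinuousOn (fun tx : ℝ × Vec d => iteratedFDeriv ℝ k (f tx.1) tx.2)
      (Set.Icc (0 : ℝ) T ×ˢ Set.univ)) ∧
  ContDiff ℝ (m : ℕ∞) g

/-- `u` is a bounded continuous solution of the integral equation (2.1). -/
def IsSol (h T : ℝ) (L1 : Finset (Vec d)) (q p : Vec d → ℝ → Vec d → ℝ)
    (c : ℝ → Vec d → ℝ) (f : ℝ → Vec d → ℝ) (g : Vec d → ℝ)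
    (u : ℝ → Vec d → ℝ) : Prop :=
  (∃ B, ∀ t ∈ Set.Icc (0 : ℝ) T, ∀ x, |u t x| ≤ B) ∧
  ContinuousOn (fun tx : ℝ × Vec d => u tx.1 tx.2) (Set.Icc (0 : ℝ) T ×ˢ Set.univ) ∧
  ∀ t ∈ Set.Icc (0 : ℝ) T, ∀ x,
    u t x = g x + ∫ s in (0 : ℝ)..t,
      (L0 h L1 (fun l => q l s) (fun l => p l s) (u s) x - c s x * u s x + f s x)

/-- `sup_{H_T} ψ`. -/
def supHT (T : ℝ) (ψ : ℝ → Vec d → ℝ) : ℝ :=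
  sSup {r : ℝ | ∃ t ∈ Set.Icc (0 : ℝ) T, ∃ x, r = ψ t x}

/-- `F_m = Σ_{k ≤ m} sup_{H_T} |Dᵏf|`. -/
def Fnorm (T : ℝ) (m : ℕ) (f : ℝ → Vec d → ℝ) : ℝ :=
  ∑ k ∈ Finset.range (m + 1), supHT T fun t x => ‖iteratedFDeriv ℝ k (f t) x‖

/-- `G_m = Σ_{k ≤ m} sup_{ℝ^d} |Dᵏg|`. -/
def Gnorm (m : ℕ) (g : Vec d → ℝ) : ℝ :=
  ∑ k ∈ Finset.range (m + 1), sSup (Set.range fun x => ‖iteratedFDeriv ℝ k g x‖)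

end GK

/-!
Applying the mean value theorem to the outermost difference and commuting the derivative with
the remaining differences, by induction `|δ̄_{h,λ}φ(x)| ≤ ∏ᵢ |τ_{λⁱ}λⁱ| · |Dⁿφ(z)|` for some `z`
in the parallelepiped `x + h[0,1]λ¹ + ⋯ + h[0,1]λⁿ`. Hence
`|δ̄_{h,λ}φ(x)|² ≤ ∏ᵢ |τ_{λⁱ}λⁱ|² · sup_{parallelepiped} |Dⁿφ|²`, and the weights
`∏ᵢ |τ_{λⁱ}λⁱ|²` sum to `‖Λ₁‖^{2n}` over `λ ∈ Λ₁ⁿ`. Normalising them turns the right-hand side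
into a convex combination of suprema over parallelepipeds, which is an operator in `𝔎`.
-/

open Set

lemma norm_iteratedFDeriv_fderiv_apply_le {𝕜 E F : Type*} [NontriviallyNormedField 𝕜]
    [NormedAddCommGroup E] [NormedSpace 𝕜 E] [NormedAddCommGroup F] [NormedSpace 𝕜 F]
    {m : ℕ} {f : E → F} (hf : ContDiff 𝕜 (m + 1 : ℕ∞) f) (v z : E) :
    ‖iteratedFDeriv 𝕜 m (fun y => fderiv 𝕜 f y v) z‖ ≤ ‖v‖ * ‖iteratedFDeriv 𝕜 (m + 1) f z‖ := by
  rw [← norm_iteratedFDeriv_fderiv]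
  exact norm_iteratedFDeriv_clm_apply_const (hf.fderiv_right le_rfl).contDiffAt le_rfl

lemma DenseRange.le_ciSup_comp {α β γ : Type*} [TopologicalSpace β]
    [ConditionallyCompleteLattice γ] [TopologicalSpace γ] [ClosedIicTopology γ] {p : α → β}
    (hp : DenseRange p) {G : β → γ} (hG : Continuous G) (hbdd : BddAbove (range G)) (b : β) :
    G b ≤ ⨆ a, G (p a) :=
  hp.induction_on b (isClosed_Iic.preimage hG) fun a =>
    le_ciSup (hbdd.mono (range_comp_subset_range p G)) a

namespace GK

variable {d : ℕ}

section Differences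

variable {h : ℝ} {l : Vec d} {φ : Vec d → ℝ}

lemma contDiff_del {k : ℕ∞} (hφ : ContDiff ℝ k φ) : ContDiff ℝ k (del h l φ) :=
  ((hφ.comp (contDiff_id.add contDiff_const)).sub hφ).div_const h

lemma hasFDerivAt_del (hφ : Differentiable ℝ φ) (y : Vec d) :
    HasFDerivAt (del h l φ) (h⁻¹ • (fderiv ℝ φ (y + h • l) - fderiv ℝ φ y)) y := by
  have hshift : HasFDerivAt (fun x => φ (x + h • l)) (fderiv ℝ φ (y + h • l)) y :=
    (hφ (y + h • l)).hasFDerivAt.comp y ((hasFDerivAt_id y).add_const (h • l))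
  have hdel : del h l φ = fun x => h⁻¹ • (φ (x + h • l) - φ x) := by
    funext x
    simp [del, div_eq_inv_mul]
  rw [hdel]
  exact (hshift.sub (hφ y).hasFDerivAt).const_smul h⁻¹

lemma differentiable_del (hφ : Differentiable ℝ φ) : Differentiable ℝ (del h l φ) :=
  fun y => (hasFDerivAt_del hφ y).differentiableAt

lemma fderiv_del_apply (hφ : Differentiable ℝ φ) (y v : Vec d) :
    fderiv ℝ (del h l φ) y v = del h l (fun z => fderiv ℝ φ z v) y := by
  simp [(hasFDerivAt_del hφ y).fderiv, del, div_eq_inv_mul]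

lemma exists_del_eq_fderiv (hφ : Differentiable ℝ φ) (hh : 0 < h) (x : Vec d) :
    ∃ θ ∈ Icc (0 : ℝ) 1, del h l φ x = fderiv ℝ φ (x + (h * θ) • l) l := by
  have hline : ∀ t : ℝ, HasDerivAt (fun t => φ (x + t • l)) (fderiv ℝ φ (x + t • l) l) t :=
    fun t => (hφ _).hasFDerivAt.comp_hasDerivAt t
      (by simpa using ((hasDerivAt_id t).smul_const l).const_add x)
  obtain ⟨c, hc, hslope⟩ := exists_hasDerivAt_eq_slope _ _ hh
    (fun t _ => (hline t).continuousAt.continuousWithinAt) fun t _ => hline t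
  refine ⟨c / h, ⟨div_nonneg hc.1.le hh.le, (div_le_one hh).2 hc.2.le⟩, ?_⟩
  rw [mul_div_cancel₀ c hh.ne', hslope]
  simp [del]

end Differences

section Multidifferences

variable {h τ₀ : ℝ} {τ : Vec d → ℝ} {L1 : Finset (Vec d)}

lemma dbarT_inl_zero (lam : Fin 0 → L1t L1) (φ : Vec d → ℝ) :
    dbarT h τ₀ τ (fun j => Sum.inl (lam j)) φ = φ := rfl

lemma dbarT_inl_succ {m : ℕ} (lam : Fin (m + 1) → L1t L1) (φ : Vec d → ℝ) :
    dbarT h τ₀ τ (fun j => Sum.inl (lam j)) φ = fun x =>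
      τ (lam 0) * del h (lam 0) (dbarT h τ₀ τ (fun j => Sum.inl (lam j.succ)) φ) x := by
  simp [dbarT, List.ofFn_succ, dbar]

lemma contDiff_dbarT_inl {k : ℕ∞} {φ : Vec d → ℝ} (hφ : ContDiff ℝ k φ) :
    ∀ {m : ℕ} (lam : Fin m → L1t L1), ContDiff ℝ k (dbarT h τ₀ τ (fun j => Sum.inl (lam j)) φ)
  | 0, _ => hφ
  | _ + 1, lam => by
    rw [dbarT_inl_succ]
    exact contDiff_const.mul (contDiff_del (contDiff_dbarT_inl hφ _))

lemma fderiv_dbarT_inl_apply {φ : Vec d → ℝ} (hφ : ContDiff ℝ 1 φ) (v : Vec d) :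
    ∀ {m : ℕ} (lam : Fin m → L1t L1),
      (fun y => fderiv ℝ (dbarT h τ₀ τ (fun j => Sum.inl (lam j)) φ) y v) =
        dbarT h τ₀ τ (fun j => Sum.inl (lam j)) (fun z => fderiv ℝ φ z v)
  | 0, _ => rfl
  | _ + 1, lam => by
    have hdiff := (contDiff_dbarT_inl (h := h) (τ₀ := τ₀) (τ := τ) hφ
      fun j => lam j.succ).differentiable one_ne_zero
    funext y
    rw [dbarT_inl_succ, dbarT_inl_succ, fderiv_const_mul (differentiable_del hdiff y),
      FunLike.coe_smul, Pi.smul_apply, smul_eq_mul, fderiv_del_apply hdiff,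
      fderiv_dbarT_inl_apply hφ v]

theorem exists_abs_dbarT_inl_le (hh : 0 < h) :
    ∀ {m : ℕ} (lam : Fin m → L1t L1) {φ : Vec d → ℝ}, ContDiff ℝ (m : ℕ∞) φ → ∀ x : Vec d,
      ∃ s : Fin m → Icc (0 : ℝ) 1, |dbarT h τ₀ τ (fun j => Sum.inl (lam j)) φ x| ≤
        (∏ i, ‖τ (lam i) • (lam i : Vec d)‖) *
          ‖iteratedFDeriv ℝ m φ (x + ∑ i, (h * s i) • (lam i : Vec d))‖
  | 0, lam, φ, hφ, x => ⟨Fin.elim0, by simp [dbarT_inl_zero]⟩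
  | m + 1, lam, φ, hφ, x => by
    set l : Vec d := (lam 0 : Vec d)
    have hφ1 : ContDiff ℝ 1 φ := hφ.of_le (by exact_mod_cast le_add_self)
    obtain ⟨θ, hθ, hmvt⟩ := exists_del_eq_fderiv (l := l)
      ((contDiff_dbarT_inl (h := h) (τ₀ := τ₀) (τ := τ) hφ1
        fun j => lam j.succ).differentiable one_ne_zero) hh x
    have hφl : ContDiff ℝ (m : ℕ∞) (fun z => fderiv ℝ φ z l) :=
      (hφ.fderiv_right (m := m) (by push_cast; rfl)).clm_apply contDiff_const
    obtain ⟨s, hs⟩ := exists_abs_dbarT_inl_le hh (fun j => lam j.succ) hφl (x + (h * θ) • l)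
    refine ⟨Fin.cons ⟨θ, hθ⟩ s, ?_⟩
    rw [dbarT_inl_succ, abs_mul, hmvt, congrFun (fderiv_dbarT_inl_apply hφ1 l _),
      Fin.prod_univ_succ, Fin.sum_univ_succ]
    simp only [Fin.cons_zero, Fin.cons_succ, ← add_assoc]
    calc |τ l| * |dbarT h τ₀ τ (fun j => Sum.inl (lam j.succ)) (fun z => fderiv ℝ φ z l)
          (x + (h * θ) • l)|
        ≤ |τ l| * ((∏ i : Fin m, ‖τ (lam i.succ) • (lam i.succ : Vec d)‖) *
          (‖l‖ * ‖iteratedFDeriv ℝ (m + 1) φ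
            (x + (h * θ) • l + ∑ i : Fin m, (h * s i) • (lam i.succ : Vec d))‖)) := by
          gcongr
          exact hs.trans (by gcongr; exact norm_iteratedFDeriv_fderiv_apply_le hφ _ _)
      _ = _ := by rw [norm_smul, Real.norm_eq_abs]; ring

end Multidifferences

lemma memFrakK_sum_mul {ι : Type*} [Fintype ι] {K : ι → (Vec d → ℝ) → Vec d → ℝ}
    (hK : ∀ i, MemFrakK (K i)) {a : ι → ℝ} (ha : ∀ i, 0 ≤ a i) (ha1 : ∑ i, a i ≤ 1) :
    MemFrakK fun ψ x => ∑ i, a i * K i ψ x := by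
  refine ⟨fun ψ hψm hψb => ⟨?_, ?_⟩, fun ψ hψ x => ?_, fun x => ?_⟩
  · exact Finset.measurable_sum _ fun i _ => ((hK i).1 ψ hψm hψb).1.const_mul _
  · choose C hC using fun i => isBounded_iff_forall_norm_le.1 ((hK i).1 ψ hψm hψb).2
    refine isBounded_iff_forall_norm_le.2 ⟨∑ i, a i * C i, ?_⟩
    rintro _ ⟨x, rfl⟩
    refine (norm_sum_le _ _).trans (Finset.sum_le_sum fun i _ => ?_)
    rw [norm_mul, Real.norm_of_nonneg (ha i)]
    exact mul_le_mul_of_nonneg_left (hC i _ (mem_range_self x)) (ha i)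
  · exact Finset.sum_nonneg fun i _ => mul_nonneg (ha i) ((hK i).2.1 ψ hψ x)
  · calc ∑ i, a i * K i (fun _ => 1) x ≤ ∑ i, a i * 1 :=
          Finset.sum_le_sum fun i _ => mul_le_mul_of_nonneg_left ((hK i).2.2 x) (ha i)
      _ ≤ 1 := by simpa using ha1

section ParallelepipedSup

variable {n : ℕ} {h : ℝ} {v : Fin n → Vec d} {ψ : Vec d → ℝ}

-- Rational parameters, clamped to `[0,1]`, keep the supremum countable, hence measurable in `x`.
def parallelepipedSup (h : ℝ) (v : Fin n → Vec d) (ψ : Vec d → ℝ) (x : Vec d) : ℝ :=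
  ⨆ t : Fin n → ℚ, ψ (x + ∑ i, (h * projIcc (0 : ℝ) 1 zero_le_one (t i)) • v i)

lemma abs_parallelepipedSup_le {C : ℝ} (hψ : ∀ y, |ψ y| ≤ C) (x : Vec d) :
    |parallelepipedSup h v ψ x| ≤ C := by
  have hbdd : BddAbove (range fun t : Fin n → ℚ =>
      ψ (x + ∑ i, (h * projIcc (0 : ℝ) 1 zero_le_one (t i)) • v i)) :=
    ⟨C, by rintro _ ⟨t, rfl⟩; exact (abs_le.1 (hψ _)).2⟩
  exact abs_le.2
    ⟨(abs_le.1 (hψ _)).1.trans (le_ciSup hbdd 0), ciSup_le fun t => (abs_le.1 (hψ _)).2⟩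

lemma memFrakK_parallelepipedSup : MemFrakK (parallelepipedSup h v) := by
  refine ⟨fun ψ hψm hψb => ⟨?_, ?_⟩, fun ψ hψ x => Real.iSup_nonneg fun t => hψ _,
    fun x => (ciSup_const (ι := Fin n → ℚ)).le⟩
  · exact Measurable.iSup fun t => hψm.comp (measurable_id.add_const _)
  · obtain ⟨C, hC⟩ := isBounded_iff_forall_norm_le.1 hψb
    refine isBounded_iff_forall_norm_le.2 ⟨C, ?_⟩
    rintro _ ⟨x, rfl⟩
    exact abs_parallelepipedSup_le (fun y => hC _ (mem_range_self y)) x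

lemma le_parallelepipedSup (hψ : Continuous ψ) (s : Fin n → Icc (0 : ℝ) 1) (x : Vec d) :
    ψ (x + ∑ i, (h * s i) • v i) ≤ parallelepipedSup h v ψ x := by
  have hG : Continuous fun s : Fin n → Icc (0 : ℝ) 1 => ψ (x + ∑ i, (h * s i) • v i) := by
    fun_prop
  have hdense : DenseRange fun t : Fin n → ℚ => fun i => projIcc (0 : ℝ) 1 zero_le_one (t i) :=
    DenseRange.piMap fun _ => (projIcc_surjective zero_le_one).denseRange.comp
      Rat.denseRange_cast (continuous_projIcc (h := zero_le_one))
  exact hdense.le_ciSup_comp hG (isCompact_range hG).bddAbove s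

end ParallelepipedSup

section Estimate

variable {h τ₀ : ℝ} {τ : Vec d → ℝ} {L1 : Finset (Vec d)}

theorem sq_dbarT_inl_le (hh : 0 < h) {m : ℕ} (lam : Fin m → L1t L1) {φ : Vec d → ℝ}
    (hφ : ContDiff ℝ (m : ℕ∞) φ) (x : Vec d) :
    (dbarT h τ₀ τ (fun j => Sum.inl (lam j)) φ x) ^ 2 ≤
      (∏ i, ‖τ (lam i) • (lam i : Vec d)‖ ^ 2) *
        parallelepipedSup h (fun i => (lam i : Vec d))
          (fun y => ‖iteratedFDeriv ℝ m φ y‖ ^ 2) x := by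
  obtain ⟨s, hs⟩ := exists_abs_dbarT_inl_le (τ₀ := τ₀) (τ := τ) hh lam hφ x
  rw [← sq_abs, Finset.prod_pow]
  calc |dbarT h τ₀ τ (fun j => Sum.inl (lam j)) φ x| ^ 2
      ≤ ((∏ i, ‖τ (lam i) • (lam i : Vec d)‖) *
          ‖iteratedFDeriv ℝ m φ (x + ∑ i, (h * s i) • (lam i : Vec d))‖) ^ 2 := by gcongr
    _ ≤ _ := by
      rw [mul_pow]
      gcongr
      exact le_parallelepipedSup ((hφ.continuous_iteratedFDeriv le_rfl).norm.pow 2) s x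

lemma wnormL1sq_nonneg : 0 ≤ wnormL1sq L1 τ :=
  Finset.sum_nonneg fun _ _ => sq_nonneg _

lemma wnormL1sq_pow (n : ℕ) :
    wnormL1sq L1 τ ^ n = ∑ lam : Fin n → L1t L1, ∏ i, ‖τ (lam i) • (lam i : Vec d)‖ ^ 2 := by
  rw [wnormL1sq, ← Finset.sum_coe_sort, Fintype.sum_pow]

end Estimate

end GK

open GK in
theorem stmt5_general {d : ℕ} (L1 : Finset (Vec d)) (τ : Vec d → ℝ) (n : ℕ) (h : ℝ) (hh : 0 < h) :
    ∃ K : (Vec d → ℝ) → Vec d → ℝ, MemFrakK K ∧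
      ∀ φ : Vec d → ℝ, ContDiff ℝ (n : ℕ∞) φ → ∀ x,
        (∑ lam : Fin n → L1t L1, (dbarT h 0 τ (fun j => Sum.inl (lam j)) φ x) ^ 2)
          ≤ (wnormL1sq L1 τ) ^ n * K (fun y => ‖iteratedFDeriv ℝ n φ y‖ ^ 2) x := by
  set w : (Fin n → L1t L1) → ℝ := fun lam => ∏ i, ‖τ (lam i) • (lam i : Vec d)‖ ^ 2
  have hw : ∀ lam, 0 ≤ w lam := fun lam => by positivity
  refine ⟨fun ψ x => ∑ lam, w lam / wnormL1sq L1 τ ^ n *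
      parallelepipedSup h (fun i => (lam i : Vec d)) ψ x,
    memFrakK_sum_mul (fun _ => memFrakK_parallelepipedSup)
      (fun lam => div_nonneg (hw lam) (pow_nonneg wnormL1sq_nonneg n))
      (by rw [← Finset.sum_div, ← wnormL1sq_pow]; exact div_self_le_one _),
    fun φ hφ x => ?_⟩
  rw [Finset.mul_sum]
  gcongr with lam
  have hw_le : w lam ≤ wnormL1sq L1 τ ^ n :=
    wnormL1sq_pow (τ := τ) n ▸ Finset.single_le_sum (fun l _ => hw l) (Finset.mem_univ lam)
  -- `hw_le` makes the division harmless when `‖Λ₁‖ = 0`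
  rw [← mul_assoc, mul_div_cancel_of_imp' fun h0 => le_antisymm (h0 ▸ hw_le) (hw lam)]
  exact sq_dbarT_inl_le hh lam hφ x

open GK in
/-- First inequality in (3.21.5): `Σ_{λ∈Λ₁ⁿ} |δ̄_{h,λ}φ|² ≤ ‖Λ₁‖^{2n} 𝒦(|Dⁿφ|²)`
for some `𝒦 ∈ 𝔎` independent of `φ`. -/
theorem stmt5 {d : ℕ} (L1 : Finset (Vec d)) (hL1 : (0 : Vec d) ∉ L1)
    (τ : Vec d → ℝ) (hτ : ∀ l ∈ L1, 0 ≤ τ l)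
    (n : ℕ) (hn : 1 ≤ n) (h : ℝ) (hh : 0 < h) :
    ∃ K : (Vec d → ℝ) → Vec d → ℝ, MemFrakK K ∧
      ∀ φ : Vec d → ℝ, ContDiff ℝ (n : ℕ∞) φ → ∀ x,
        (∑ lam : Fin n → L1t L1, (dbarT h 0 τ (fun j => Sum.inl (lam j)) φ x) ^ 2)
          ≤ (wnormL1sq L1 τ) ^ n * K (fun y => ‖iteratedFDeriv ℝ n φ y‖ ^ 2) x :=
  stmt5_general L1 τ n h hh
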